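/- Let A be an algorithm and let Ã = 𝔉_SoS(A) be its Stall-on-Suspect transformation. For any valid run R̃ = ⟨F, H, I, Φ̃, T̃⟩ of Ã using the Marabout failure detector ℳ, the run R⁰ = ⟨F⁰, H, I, Φ, T⟩ is a valid run of A using the perfect failure detector 𝒫, where F⁰ is the initial crash scenario of F and Φ, T are obtained from Φ̃, T̃ by deleting every entry corresponding to a step taken by a process in faulty(F). -/

import Mathlib

/-! Under the Marabout detector every process knows the faulty set from the start. A faulty
process therefore suspects itself at its first step and stalls forever without communicating,
while a correct process never suspects itself and behaves exactly as under `A`. Deleting the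
stalled steps leaves a run of `A` in which the faulty processes crash initially, and for such a
failure pattern the Marabout output, the faulty set, is exactly what a perfect detector may
output. -/

namespace FDT

open Classical

/-- A failure pattern: a monotone assignment of crashed sets to times. -/
structure FailurePattern (Proc : Type) where
  F : ℕ → Set Proc
  mono : ∀ t, F t ⊆ F (t + 1)

variable {Proc State Msg PState : Type}

/-- The set of processes live at time `t`. -/
def live (F : FailurePattern Proc) (t : ℕ) : Set Proc := (F.F t)ᶜ

/-- The set of correct processes: those that are always live. -/
def correctS (F : FailurePattern Proc) : Set Proc := {p | ∀ t, p ∉ F.F t}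

/-- The set of faulty processes. -/
def faultyS (F : FailurePattern Proc) : Set Proc := (correctS F)ᶜ

/-- Marabout failure detector: every live process always sees exactly the faulty set. -/
def Marabout (F : FailurePattern Proc) : Set (Proc → ℕ → Set Proc) :=
  {H | ∀ t : ℕ, ∀ p ∉ F.F t, H p t = faultyS F}

/-- The perfect failure detector: strong completeness and strong accuracy. -/
def Perfect (F : FailurePattern Proc) : Set (Proc → ℕ → Set Proc) :=
  {H | (∀ q ∈ faultyS F, ∀ p ∈ correctS F, ∃ t', ∀ t > t', q ∈ H p t) ∧
       (∀ t : ℕ, ∀ p ∉ F.F t, ∀ q, q ∉ F.F t → q ∉ H p t)}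

/-- The failure detector `𝒫_k`: k-completeness and k-accuracy. -/
def Pk (k : ℕ) (F : FailurePattern Proc) : Set (Proc → ℕ → Set Proc) :=
  {H | (∀ p q : Proc, q ∉ F.F k → q ∈ faultyS F → p ∈ correctS F →
          ∃ t', ∀ t > t', q ∈ H p t) ∧
       (∀ (p q : Proc) (t : ℕ), q ∉ F.F k → q ∉ F.F t → q ∉ H p t)}

/-- `F` is an initial crash scenario: all faulty processes crash at time 0. -/
def IsInitialCrashScenario (F : FailurePattern Proc) : Prop :=
  ∀ t, F.F t = faultyS F

/-- The initial crash scenario `F⁰` associated with `F`. -/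
def initialScenario (F : FailurePattern Proc) : FailurePattern Proc :=
  ⟨fun _ => faultyS F, fun _ => subset_rfl⟩

/-- The shifted failure pattern `t ↦ F(t+1)`. -/
def shiftPattern (F : FailurePattern Proc) : FailurePattern Proc :=
  ⟨fun t => F.F (t + 1), fun t => F.mono (t + 1)⟩

/-- A step `(p, s, m, d, s', m')` of process `p`. -/
structure Step (Proc State Msg : Type) where
  proc : Proc
  st : State
  recv : Option (Proc × Msg)
  fd : Set Proc
  st' : State
  send : Option (Proc × Msg)

/-- An algorithm: state sets, nonempty initial state sets, and a deterministic
transition relation given as the set of allowed steps. -/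
structure Algorithm (Proc State Msg : Type) where
  Q : Proc → Set State
  init : Proc → Set State
  init_sub : ∀ p, init p ⊆ Q p
  init_nonempty : ∀ p, (init p).Nonempty
  allowed : Set (Step Proc State Msg)
  allowed_st : ∀ s ∈ allowed, s.st ∈ Q s.proc ∧ s.st' ∈ Q s.proc
  det : ∀ s ∈ allowed, ∀ s' ∈ allowed,
    s.proc = s'.proc → s.st = s'.st → s.recv = s'.recv → s.fd = s'.fd →
    s.st' = s'.st' ∧ s.send = s'.send

/-- `R = ⟨F, H, I, Φ, T⟩` is a valid run of algorithm `A` using failure detector `D`. -/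
def ValidRun (A : Algorithm Proc State Msg)
    (D : FailurePattern Proc → Set (Proc → ℕ → Set Proc))
    (F : FailurePattern Proc) (H : Proc → ℕ → Set Proc) (I : Proc → State)
    (Φ : ℕ → Step Proc State Msg) (T : ℕ → ℕ) : Prop :=
  -- the time sequence is strictly increasing
  StrictMono T ∧
  -- the history belongs to the detector
  H ∈ D F ∧
  -- the initial configuration is made of initial states
  (∀ p, I p ∈ A.init p) ∧
  -- correct processes take infinitely many steps
  (∀ p ∈ correctS F, ∀ n : ℕ, ∃ ℓ ≥ n, (Φ ℓ).proc = p) ∧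
  -- all steps are allowed by the algorithm
  (∀ ℓ, Φ ℓ ∈ A.allowed) ∧
  -- a process taking a step is live at that time
  (∀ ℓ, (Φ ℓ).proc ∉ F.F (T ℓ)) ∧
  -- the failure detector output is the history value at that time
  (∀ ℓ, (Φ ℓ).fd = H (Φ ℓ).proc (T ℓ)) ∧
  -- no spurious messages
  (∀ ℓ q m, (Φ ℓ).recv = some (q, m) →
     ∃ k < ℓ, (Φ k).proc = q ∧ (Φ k).send = some ((Φ ℓ).proc, m)) ∧
  -- reliable links: each sent message received at most once; exactly once at correct processes
  (∀ ℓ q m, (Φ ℓ).send = some (q, m) →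
     (∀ k k', ℓ < k → ℓ < k' → (Φ k).proc = q → (Φ k).recv = some ((Φ ℓ).proc, m) →
        (Φ k').proc = q → (Φ k').recv = some ((Φ ℓ).proc, m) → k = k') ∧
     (q ∈ correctS F → ∃ k > ℓ, (Φ k).proc = q ∧ (Φ k).recv = some ((Φ ℓ).proc, m))) ∧
  -- the first step of a process starts in its initial state
  (∀ ℓ, (∀ k < ℓ, (Φ k).proc ≠ (Φ ℓ).proc) → (Φ ℓ).st = I (Φ ℓ).proc) ∧
  -- the state does not change between consecutive steps of a process
  (∀ ℓ k, ℓ < k → (Φ k).proc = (Φ ℓ).proc →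
     (∀ j, ℓ < j → j < k → (Φ j).proc ≠ (Φ ℓ).proc) → (Φ k).st = (Φ ℓ).st')

/-- `γ(I,Φ,ℓ)`: the configuration (process states) after the first `ℓ` steps of `Φ`. -/
noncomputable def configAt (I : Proc → State) (Φ : ℕ → Step Proc State Msg) :
    ℕ → Proc → State
  | 0 => I
  | (ℓ + 1) => fun p =>
      if (Φ ℓ).proc = p then (Φ ℓ).st' else configAt I Φ ℓ p

/-- `γ_i(I,Φ,ℓ)`: the state of process `p` after its first `ℓ` own steps in `Φ`
(constant once `p` takes no more steps). -/
noncomputable def procStateAfter (I : Proc → State) (Φ : ℕ → Step Proc State Msg)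
    (p : Proc) : ℕ → State
  | 0 => I p
  | (ℓ + 1) =>
      if h : ∃ k, (Φ k).proc = p ∧ {j | j < k ∧ (Φ j).proc = p}.ncard = ℓ
      then (Φ h.choose).st'
      else procStateAfter I Φ p ℓ

/-- `Φ, T` are obtained from `Φt, Tt` by deleting exactly the entries whose
process lies in `bad`. -/
def IsDeletion (bad : Set Proc) (Φt : ℕ → Step Proc State Msg) (Tt : ℕ → ℕ)
    (Φ : ℕ → Step Proc State Msg) (T : ℕ → ℕ) : Prop :=
  ∃ e : ℕ → ℕ, StrictMono e ∧
    (∀ ℓ, (Φt (e ℓ)).proc ∉ bad) ∧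
    (∀ n, (Φt n).proc ∉ bad → ∃ ℓ, e ℓ = n) ∧
    (∀ ℓ, Φ ℓ = Φt (e ℓ)) ∧ (∀ ℓ, T ℓ = Tt (e ℓ))

/-- Index `n` is the first step of its process in schedule `Φ`. -/
def IsFirstStep (Φ : ℕ → Step Proc State Msg) (n : ℕ) : Prop :=
  ∀ j < n, (Φ j).proc ≠ (Φ n).proc

/-- `Φ, T` are obtained from `Φt, Tt` by deleting, for each process, the entry of its
first step. -/
def IsFirstStepDeletion (Φt : ℕ → Step Proc State Msg) (Tt : ℕ → ℕ)
    (Φ : ℕ → Step Proc State Msg) (T : ℕ → ℕ) : Prop :=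
  ∃ e : ℕ → ℕ, StrictMono e ∧
    (∀ ℓ, ¬ IsFirstStep Φt (e ℓ)) ∧
    (∀ n, ¬ IsFirstStep Φt n → ∃ ℓ, e ℓ = n) ∧
    (∀ ℓ, Φ ℓ = Φt (e ℓ)) ∧ (∀ ℓ, T ℓ = Tt (e ℓ))

/-- Data for the Stall-on-Suspect transformation of `A`: the fresh stall states
`S†_i` (disjoint from `Q_i`) together with the bijections `stall_i : Q̂_i → S†_i`. -/
structure SoSData (A : Algorithm Proc State Msg) where
  Sd : Proc → Set State
  disj : ∀ p, Disjoint (Sd p) (A.Q p)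
  stall : Proc → State → State
  stall_maps : ∀ p, ∀ q ∈ A.init p, stall p q ∈ Sd p
  stall_inj : ∀ p, Set.InjOn (stall p) (A.init p)
  stall_surj : ∀ p, Sd p ⊆ stall p '' (A.init p)

/-- The Stall-on-Suspect transformation `Ã = 𝔉_SoS(A)`. -/
def SoSAlg (A : Algorithm Proc State Msg) (D : SoSData A) :
    Algorithm Proc State Msg where
  Q p := A.Q p ∪ D.Sd p
  init := A.init
  init_sub p := (A.init_sub p).trans Set.subset_union_left
  init_nonempty := A.init_nonempty
  allowed := {s | (s ∈ A.allowed ∧ ¬(s.st ∈ A.init s.proc ∧ s.proc ∈ s.fd)) ∨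
      (s.st ∈ A.init s.proc ∧ s.proc ∈ s.fd ∧ s.st' = D.stall s.proc s.st ∧
        s.recv = none ∧ s.send = none) ∨
      (s.st ∈ D.Sd s.proc ∧ s.st' = s.st ∧ s.recv = none ∧ s.send = none)}
  allowed_st := by
    rintro s (⟨hA, -⟩ | ⟨h1, h2, h3, -⟩ | ⟨h1, h2, -⟩)
    · exact ⟨Set.mem_union_left _ (A.allowed_st s hA).1,
        Set.mem_union_left _ (A.allowed_st s hA).2⟩
    · exact ⟨Set.mem_union_left _ (A.init_sub _ h1),
        Set.mem_union_right _ (h3 ▸ D.stall_maps _ _ h1)⟩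
    · exact ⟨Set.mem_union_right _ h1, Set.mem_union_right _ (h2 ▸ h1)⟩
  det := by
    rintro s hs s' hs' hproc hst hrecv hfd
    rcases hs with ⟨hA, hn⟩ | ⟨h1, h2, h3, h4, h5⟩ | ⟨h1, h2, h3, h4⟩ <;>
      rcases hs' with ⟨hA', hn'⟩ | ⟨h1', h2', h3', h4', h5'⟩ | ⟨h1', h2', h3', h4'⟩
    · exact A.det s hA s' hA' hproc hst hrecv hfd
    · exact absurd ⟨by rw [hproc, hst]; exact h1', by rw [hproc, hfd]; exact h2'⟩ hn
    · exact absurd ((A.allowed_st s hA).1)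
        (Set.disjoint_left.mp (D.disj s.proc) (by rw [hproc, hst]; exact h1'))
    · exact absurd ⟨by rw [← hproc, ← hst]; exact h1, by rw [← hproc, ← hfd]; exact h2⟩ hn'
    · refine ⟨?_, by rw [h5, h5']⟩
      rw [h3, h3', hproc, hst]
    · exact absurd (A.init_sub _ h1)
        (Set.disjoint_left.mp (D.disj s.proc) (by rw [hproc, hst]; exact h1'))
    · exact absurd ((A.allowed_st s' hA').1)
        (Set.disjoint_left.mp (D.disj s'.proc) (by rw [← hproc, ← hst]; exact h1))
    · exact absurd (A.init_sub _ h1')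
        (Set.disjoint_left.mp (D.disj s'.proc) (by rw [← hproc, ← hst]; exact h1))
    · exact ⟨by rw [h2, h2', hst], by rw [h4, h4']⟩

/-- Data for the Delay-a-Step transformation of `A`: fresh initial states `S⋆_i`
(disjoint from `Q_i`) together with the bijections `delay_i : S⋆_i → Q̂_i`. -/
structure DaSData (A : Algorithm Proc State Msg) where
  Ss : Proc → Set State
  disj : ∀ p, Disjoint (Ss p) (A.Q p)
  delay : Proc → State → State
  delay_maps : ∀ p, ∀ s ∈ Ss p, delay p s ∈ A.init p
  delay_inj : ∀ p, Set.InjOn (delay p) (Ss p)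
  delay_surj : ∀ p, A.init p ⊆ delay p '' (Ss p)

/-- The Delay-a-Step transformation `Ã = 𝔉_DaS(A)`. -/
def DaSAlg (A : Algorithm Proc State Msg) (D : DaSData A) :
    Algorithm Proc State Msg where
  Q p := A.Q p ∪ D.Ss p
  init p := D.Ss p
  init_sub p := Set.subset_union_right
  init_nonempty p := by
    obtain ⟨q, hq⟩ := A.init_nonempty p
    obtain ⟨s, hs, -⟩ := D.delay_surj p hq
    exact ⟨s, hs⟩
  allowed := {s | s ∈ A.allowed ∨
      (s.st ∈ D.Ss s.proc ∧ s.st' = D.delay s.proc s.st ∧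
        s.recv = none ∧ s.send = none)}
  allowed_st := by
    rintro s (hA | ⟨h1, h2, -⟩)
    · exact ⟨Set.mem_union_left _ (A.allowed_st s hA).1,
        Set.mem_union_left _ (A.allowed_st s hA).2⟩
    · exact ⟨Set.mem_union_right _ h1,
        Set.mem_union_left _ (A.init_sub _ (h2 ▸ D.delay_maps _ _ h1))⟩
  det := by
    rintro s hs s' hs' hproc hst hrecv hfd
    rcases hs with hA | ⟨h1, h2, h3, h4⟩ <;> rcases hs' with hA' | ⟨h1', h2', h3', h4'⟩
    · exact A.det s hA s' hA' hproc hst hrecv hfd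
    · exact absurd ((A.allowed_st s hA).1)
        (Set.disjoint_left.mp (D.disj s.proc) (by rw [hproc, hst]; exact h1'))
    · exact absurd ((A.allowed_st s' hA').1)
        (Set.disjoint_left.mp (D.disj s'.proc) (by rw [← hproc, ← hst]; exact h1))
    · exact ⟨by rw [h2, h2', hproc, hst], by rw [h4, h4']⟩

/-- One stuttering insertion: `w'` is obtained from `w` by inserting between the
`n`-th and `(n+1)`-st configurations a configuration agreeing componentwise with
one of the two. -/
def Stutter1 (w w' : ℕ → Proc → PState) : Prop :=
  ∃ n : ℕ, (∀ k ≤ n, w' k = w k) ∧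
    (∀ p, w' (n + 1) p = w n p ∨ w' (n + 1) p = w (n + 1) p) ∧
    (∀ k, n < k → w' (k + 1) = w k)

/-- `w ⊑ w'`: `w'` is obtained from `w` by finitely many stuttering insertions. -/
def Stutter (w w' : ℕ → Proc → PState) : Prop :=
  Relation.ReflTransGen Stutter1 w w'

/-- A time-free problem: a predicate on problem-configuration sequences and
failure patterns, satisfying crash time independence and finite stuttering. -/
structure TimeFreeProblem (Proc PState : Type) (initP : Set PState) where
  pred : (ℕ → Proc → PState) → FailurePattern Proc → Prop
  crashIndep : ∀ (w : ℕ → Proc → PState) (F F' : FailurePattern Proc),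
    (∀ p, w 0 p ∈ initP) → correctS F = correctS F' → (pred w F ↔ pred w F')
  stutterInv : ∀ (w w' : ℕ → Proc → PState) (F : FailurePattern Proc),
    (∀ p, w 0 p ∈ initP) → Stutter w w' → (pred w F ↔ pred w' F)

/-- `V` is an interpretation of the states of `A`: each `V_i` maps `Q_i` onto the
problem states, and `Q̂_i` onto the initial problem states `initP`. -/
def IsInterp (A : Algorithm Proc State Msg) (initP : Set PState)
    (V : Proc → State → PState) : Prop :=
  (∀ p, V p '' A.Q p = Set.univ) ∧ (∀ p, V p '' A.init p = initP)

/-- The interpreted run of a run with initial configuration `I` and schedule `Φ`. -/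
noncomputable def interpRun (V : Proc → State → PState) (I : Proc → State)
    (Φ : ℕ → Step Proc State Msg) : ℕ → Proc → PState :=
  fun ℓ p => V p (configAt I Φ ℓ p)

/-- Algorithm `A` solves problem `P` using failure detector `D`. -/
noncomputable def Solves (A : Algorithm Proc State Msg)
    (D : FailurePattern Proc → Set (Proc → ℕ → Set Proc))
    (P : (ℕ → Proc → PState) → FailurePattern Proc → Prop)
    (initP : Set PState) : Prop :=
  ∃ V : Proc → State → PState, IsInterp A initP V ∧
    ∀ (F : FailurePattern Proc) (H : Proc → ℕ → Set Proc) (I : Proc → State)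
      (Φ : ℕ → Step Proc State Msg) (T : ℕ → ℕ),
      ValidRun A D F H I Φ T → P (interpRun V I Φ) F

/-- Problem `P` is solvable using failure detector `D`. -/
noncomputable def SolvableWith (Proc : Type) {PState : Type}
    (D : FailurePattern Proc → Set (Proc → ℕ → Set Proc))
    (P : (ℕ → Proc → PState) → FailurePattern Proc → Prop)
    (initP : Set PState) : Prop :=
  ∃ (State Msg : Type) (A : Algorithm Proc State Msg), Solves A D P initP

/-- Problem states of strong consensus: an input value in `{0,1}` and a decision
in `{⊥,0,1}`. -/
abbrev SCState : Type := Bool × Option Bool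

/-- Initial problem states of strong consensus: no decision yet. -/
def SCinit : Set SCState := {s | s.2 = none}

/-- The strong-consensus predicate: inputs never change, decisions change at most
once and only from `⊥`, and all correct processes eventually forever decide the
input value of a single correct process (when a correct process exists). -/
def SCpred (w : ℕ → Proc → SCState) (F : FailurePattern Proc) : Prop :=
  (∀ (p : Proc) (ℓ : ℕ), (w ℓ p).1 = (w 0 p).1) ∧
  (∀ (p : Proc) (ℓ : ℕ), (w ℓ p).2 ≠ none → (w (ℓ + 1) p).2 = (w ℓ p).2) ∧
  ((correctS F).Nonempty →
    ∃ j ∈ correctS F, ∀ i ∈ correctS F, ∃ N, ∀ ℓ ≥ N, (w ℓ i).2 = some (w 0 j).1)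

section Schedule

variable {A : Algorithm Proc State Msg} {D : FailurePattern Proc → Set (Proc → ℕ → Set Proc)}
  {F : FailurePattern Proc} {H : Proc → ℕ → Set Proc} {I : Proc → State}
  {Φ : ℕ → Step Proc State Msg} {T : ℕ → ℕ}

theorem ValidRun.st_eq_init_or_prev (hrun : ValidRun A D F H I Φ T) (n : ℕ) :
    (Φ n).st = I (Φ n).proc ∨ ∃ m < n, (Φ m).proc = (Φ n).proc ∧ (Φ n).st = (Φ m).st' := by
  obtain ⟨-, -, -, -, -, -, -, -, -, hfirst, hchain⟩ := hrun
  by_cases hprev : ∃ k < n, (Φ k).proc = (Φ n).proc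
  · right
    let P : ℕ → Prop := fun j => j < n ∧ (Φ j).proc = (Φ n).proc
    obtain ⟨k, hkP⟩ := hprev
    have hP : P (Nat.findGreatest P n) := Nat.findGreatest_spec hkP.1.le hkP
    refine ⟨_, hP.1, hP.2, hchain _ n hP.1 hP.2.symm fun j hj hjn hjp => ?_⟩
    exact Nat.findGreatest_is_greatest hj hjn.le ⟨hjn, hjp.trans hP.2⟩
  · exact Or.inl (hfirst n fun k hk hkp => hprev ⟨k, hk, hkp⟩)

theorem ValidRun.st_mem_of_step_closed (hrun : ValidRun A D F H I Φ T) {S : Proc → Set State}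
    (hI : ∀ p, I p ∈ S p)
    (hstep : ∀ n, (Φ n).st ∈ S (Φ n).proc → (Φ n).st' ∈ S (Φ n).proc) (n : ℕ) :
    (Φ n).st ∈ S (Φ n).proc := by
  induction n using Nat.strong_induction_on with
  | _ n ih =>
    rcases hrun.st_eq_init_or_prev n with hinit | ⟨m, hm, hproc, hst⟩
    · exact hinit ▸ hI _
    · rw [hst, ← hproc]
      exact hstep m (ih m hm)

theorem ValidRun.fd_eq_faultyS (hrun : ValidRun A Marabout F H I Φ T) (n : ℕ) :
    (Φ n).fd = faultyS F := by
  obtain ⟨-, hH, -, -, -, hlive, hfd, -⟩ := hrun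
  rw [hfd n, hH _ _ (hlive n)]

end Schedule

theorem correctS_initialScenario (F : FailurePattern Proc) :
    correctS (initialScenario F) = correctS F := by
  ext p
  simp [correctS, initialScenario, faultyS]

theorem marabout_subset_perfect_initialScenario (F : FailurePattern Proc) :
    Marabout F ⊆ Perfect (initialScenario F) := by
  intro H hH
  refine ⟨fun q hq p hp => ⟨0, fun t _ => ?_⟩, fun t p hp q hq => ?_⟩
  · rw [correctS_initialScenario] at hp
    rw [hH t p (hp t)]
    simpa [faultyS, correctS_initialScenario] using hq
  · have hp : p ∈ correctS F := not_not.mp hp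
    rw [hH t p (hp t)]
    exact hq

theorem ValidRun.comp_strictMono {A' A : Algorithm Proc State Msg}
    {D' D : FailurePattern Proc → Set (Proc → ℕ → Set Proc)} {F F' : FailurePattern Proc}
    {H : Proc → ℕ → Set Proc} {I : Proc → State} {Φ : ℕ → Step Proc State Msg} {T : ℕ → ℕ}
    (hrun : ValidRun A' D' F H I Φ T) {bad : Set Proc} {e : ℕ → ℕ} (he : StrictMono e)
    (hkept : ∀ ℓ, (Φ (e ℓ)).proc ∉ bad) (hsurj : ∀ n, (Φ n).proc ∉ bad → n ∈ Set.range e)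
    (hsilent : ∀ n, (Φ n).proc ∈ bad → (Φ n).send = none)
    (hcorrect : correctS F' ⊆ correctS F ∩ badᶜ) (hH : H ∈ D F')
    (hinit : ∀ p, I p ∈ A.init p) (hallowed : ∀ n, (Φ n).proc ∉ bad → Φ n ∈ A.allowed)
    (hlive : ∀ n, (Φ n).proc ∉ bad → (Φ n).proc ∉ F'.F (T n)) :
    ValidRun A D F' H I (Φ ∘ e) (T ∘ e) := by
  obtain ⟨hT, -, -, hinf, -, -, hfd, hspur, hrel, hfirst, hchain⟩ := hrun
  refine ⟨hT.comp he, hH, hinit, ?_, fun ℓ => hallowed _ (hkept ℓ), fun ℓ => hlive _ (hkept ℓ),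
    fun ℓ => hfd (e ℓ), ?_, ?_, ?_, ?_⟩
  · intro p hp n
    obtain ⟨hpF, hpbad⟩ := hcorrect hp
    obtain ⟨k, hk, rfl⟩ := hinf p hpF (e n)
    obtain ⟨ℓ, rfl⟩ := hsurj k hpbad
    exact ⟨ℓ, he.le_iff_le.mp hk, rfl⟩
  · intro ℓ q m hrecv
    obtain ⟨k, hk, hkq, hks⟩ := hspur (e ℓ) q m hrecv
    have hkbad : (Φ k).proc ∉ bad := fun h => by simp [hsilent k h] at hks
    obtain ⟨k, rfl⟩ := hsurj _ hkbad
    exact ⟨k, he.lt_iff_lt.mp hk, hkq, hks⟩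
  · intro ℓ q m hsend
    obtain ⟨huniq, hdeliv⟩ := hrel (e ℓ) q m hsend
    refine ⟨fun k k' hk hk' hkq hkr hk'q hk'r =>
      he.injective (huniq _ _ (he hk) (he hk') hkq hkr hk'q hk'r), fun hq => ?_⟩
    obtain ⟨hqF, hqbad⟩ := hcorrect hq
    obtain ⟨k, hk, hkq, hkr⟩ := hdeliv hqF
    obtain ⟨k, rfl⟩ := hsurj k (hkq ▸ hqbad)
    exact ⟨k, he.lt_iff_lt.mp hk, hkq, hkr⟩
  · intro ℓ hℓ
    refine hfirst (e ℓ) fun k hk hkp => ?_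
    obtain ⟨k, rfl⟩ := hsurj k (hkp ▸ hkept ℓ)
    exact hℓ k (he.lt_iff_lt.mp hk) hkp
  · intro ℓ k hℓk hkp hbetween
    refine hchain (e ℓ) (e k) (he hℓk) hkp fun j hj hjk hjp => ?_
    obtain ⟨j, rfl⟩ := hsurj j (hjp ▸ hkept ℓ)
    exact hbetween j (he.lt_iff_lt.mp hj) (he.lt_iff_lt.mp hjk) hjp

namespace SoSAlg

variable {A : Algorithm Proc State Msg} {D : SoSData A} {s : Step Proc State Msg}

theorem allowed_of_notMem_fd (hs : s ∈ (SoSAlg A D).allowed) (hfd : s.proc ∉ s.fd)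
    (hQ : s.st ∈ A.Q s.proc) : s ∈ A.allowed := by
  rcases hs with ⟨hA, -⟩ | ⟨-, hmem, -⟩ | ⟨hSd, -⟩
  · exact hA
  · exact absurd hmem hfd
  · exact absurd hQ (Set.disjoint_left.mp (D.disj _) hSd)

theorem stall_of_mem_fd (hs : s ∈ (SoSAlg A D).allowed) (hfd : s.proc ∈ s.fd)
    (hst : s.st ∈ A.init s.proc ∪ D.Sd s.proc) : s.st' ∈ D.Sd s.proc ∧ s.send = none := by
  rcases hs with ⟨hA, hnot⟩ | ⟨hinit, -, hst', -, hsend⟩ | ⟨hSd, hst', -, hsend⟩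
  · rcases hst with hinit | hSd
    · exact absurd ⟨hinit, hfd⟩ hnot
    · exact absurd (A.allowed_st s hA).1 (Set.disjoint_left.mp (D.disj _) hSd)
  · exact ⟨hst' ▸ D.stall_maps _ _ hinit, hsend⟩
  · exact ⟨hst' ▸ hSd, hsend⟩

end SoSAlg

section SoSRun

variable {A : Algorithm Proc State Msg} {D : SoSData A} {F : FailurePattern Proc}
  {H : Proc → ℕ → Set Proc} {I : Proc → State} {Φ : ℕ → Step Proc State Msg} {T : ℕ → ℕ}

theorem ValidRun.sos_allowed_of_notMem_faultyS (hrun : ValidRun (SoSAlg A D) Marabout F H I Φ T)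
    {n : ℕ} (hn : (Φ n).proc ∉ faultyS F) : Φ n ∈ A.allowed := by
  have ⟨_, _, hinit, _, hallowed, _⟩ := hrun
  have hfd : ∀ n, (Φ n).proc ∉ faultyS F → (Φ n).proc ∉ (Φ n).fd := fun n hn => by
    rwa [hrun.fd_eq_faultyS n]
  have hQ : (Φ n).proc ∉ faultyS F → (Φ n).st ∈ A.Q (Φ n).proc := by
    refine hrun.st_mem_of_step_closed (S := fun p => {s | p ∉ faultyS F → s ∈ A.Q p})
      (fun p _ => A.init_sub p (hinit p)) (fun m hm hmF => ?_) n
    exact (A.allowed_st _ (SoSAlg.allowed_of_notMem_fd (hallowed m) (hfd m hmF) (hm hmF))).2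
  exact SoSAlg.allowed_of_notMem_fd (hallowed n) (hfd n hn) (hQ hn)

theorem ValidRun.sos_send_eq_none_of_mem_faultyS
    (hrun : ValidRun (SoSAlg A D) Marabout F H I Φ T) {n : ℕ} (hn : (Φ n).proc ∈ faultyS F) :
    (Φ n).send = none := by
  have ⟨_, _, hinit, _, hallowed, _⟩ := hrun
  have hfd : ∀ n, (Φ n).proc ∈ faultyS F → (Φ n).proc ∈ (Φ n).fd := fun n hn => by
    rwa [hrun.fd_eq_faultyS n]
  have hst : (Φ n).proc ∈ faultyS F → (Φ n).st ∈ A.init (Φ n).proc ∪ D.Sd (Φ n).proc := by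
    refine hrun.st_mem_of_step_closed
      (S := fun p => {s | p ∈ faultyS F → s ∈ A.init p ∪ D.Sd p})
      (fun p _ => Or.inl (hinit p)) (fun m hm hmF => ?_) n
    exact Or.inr (SoSAlg.stall_of_mem_fd (hallowed m) (hfd m hmF) (hm hmF)).1
  exact (SoSAlg.stall_of_mem_fd (hallowed n) (hfd n hn) (hst hn)).2

end SoSRun

theorem stall_on_suspect_gives_perfect_run_general {Proc State Msg : Type}
    (A : Algorithm Proc State Msg) (D : SoSData A)
    (F : FailurePattern Proc) (H : Proc → ℕ → Set Proc) (I : Proc → State)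
    (Φt Φ : ℕ → Step Proc State Msg) (Tt T : ℕ → ℕ)
    (hrun : ValidRun (SoSAlg A D) Marabout F H I Φt Tt)
    (hdel : IsDeletion (faultyS F) Φt Tt Φ T) :
    ValidRun A Perfect (initialScenario F) H I Φ T := by
  obtain ⟨e, he, hkept, hsurj, hΦ, hT⟩ := hdel
  obtain rfl : Φ = Φt ∘ e := funext hΦ
  obtain rfl : T = Tt ∘ e := funext hT
  have ⟨_, hH, hinit, _⟩ := hrun
  refine hrun.comp_strictMono he hkept hsurj (fun _ => hrun.sos_send_eq_none_of_mem_faultyS) ?_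
    (marabout_subset_perfect_initialScenario F hH) hinit
    (fun _ => hrun.sos_allowed_of_notMem_faultyS) fun _ => id
  rw [correctS_initialScenario, faultyS, compl_compl, Set.inter_self]

/-- For any valid run `R̃ = ⟨F,H,I,Φ̃,T̃⟩` of `Ã = 𝔉_SoS(A)` using the
Marabout detector `ℳ`, the run `R⁰ = ⟨F⁰,H,I,Φ,T⟩` is a valid run of `A` using the
perfect detector `𝒫`, where `F⁰` is the initial crash scenario of `F` and `Φ, T` are
obtained from `Φ̃, T̃` by deleting every entry of a process in `faulty(F)`. -/
theorem stall_on_suspect_gives_perfect_run {Proc State Msg : Type} [Fintype Proc] [Nonempty Proc]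
    (A : Algorithm Proc State Msg) (D : SoSData A)
    (F : FailurePattern Proc) (H : Proc → ℕ → Set Proc) (I : Proc → State)
    (Φt Φ : ℕ → Step Proc State Msg) (Tt T : ℕ → ℕ)
    (hrun : ValidRun (SoSAlg A D) Marabout F H I Φt Tt)
    (hdel : IsDeletion (faultyS F) Φt Tt Φ T) :
    ValidRun A Perfect (initialScenario F) H I Φ T :=
  stall_on_suspect_gives_perfect_run_general A D F H I Φt Φ Tt T hrun hdel

end FDT
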